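/- arXiv:2403.14535 — 2 statements merged into one kernel-verified Lean document; each statement's English description precedes it below -/
import Mathlib

section
/- Sublinear convergence of PDHG iterate differences to the infimal displacement vector: let T be the PDHG operator for a standard-form LP with step size 0 < s < 1/‖A‖₂, with infimal displacement vector v, and let {z^k} be the iterates z^{k+1} = T(z^k). Then there exists a point z* with T(z*) = z* + v, and for every such z* and every k ≥ 1, min_{0 ≤ j ≤ k} ‖v − (z^{j+1} − z^j)‖_{P_s} ≤ (1/√k)·‖z⁰ − z*‖_{P_s}. -/
open Matrix Filter
open Topology
open scoped RealInnerProductSpace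

/-- Euclidean norm of a vector in `ℝ^d`. -/
noncomputable def enorm {d : ℕ} (x : Fin d → ℝ) : ℝ := Real.sqrt (x ⬝ᵥ x)

/-- Spectral norm (ℓ₂ operator norm) of a matrix. -/
noncomputable def specNorm {m n : ℕ} (A : Matrix (Fin m) (Fin n) ℝ) : ℝ :=
  sSup {t | ∃ x : Fin n → ℝ, x ⬝ᵥ x ≤ 1 ∧ t = _root_.enorm (A.mulVec x)}

/-- Componentwise positive part (projection onto the nonnegative orthant). -/
def projPos {d : ℕ} (x : Fin d → ℝ) : Fin d → ℝ := fun i => max (x i) 0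

/-- One PDHG iteration with equal primal/dual step size `s`. -/
noncomputable def pdhgT {m n : ℕ} (A : Matrix (Fin m) (Fin n) ℝ) (b : Fin m → ℝ)
    (c : Fin n → ℝ) (s : ℝ) (z : (Fin n → ℝ) × (Fin m → ℝ)) : (Fin n → ℝ) × (Fin m → ℝ) :=
  let x' := projPos (z.1 + s • Aᵀ.mulVec z.2 - s • c)
  (x', z.2 - s • A.mulVec ((2 : ℝ) • x' - z.1) + s • b)

/-- The Lagrangian `L(x,y) = cᵀx - yᵀAx + bᵀy`. -/
noncomputable def lagr {m n : ℕ} (A : Matrix (Fin m) (Fin n) ℝ) (b : Fin m → ℝ)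
    (c : Fin n → ℝ) (x : Fin n → ℝ) (y : Fin m → ℝ) : ℝ :=
  c ⬝ᵥ x - y ⬝ᵥ A.mulVec x + b ⬝ᵥ y

/-- Membership in `Z = ℝ₊ⁿ × ℝᵐ`. -/
def inZ {m n : ℕ} (z : (Fin n → ℝ) × (Fin m → ℝ)) : Prop := ∀ i, 0 ≤ z.1 i

/-- Saddle point of `L` over `Z`. -/
def isSaddle {m n : ℕ} (A : Matrix (Fin m) (Fin n) ℝ) (b : Fin m → ℝ) (c : Fin n → ℝ)
    (z : (Fin n → ℝ) × (Fin m → ℝ)) : Prop :=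
  inZ z ∧ ∀ w : (Fin n → ℝ) × (Fin m → ℝ), inZ w →
    lagr A b c z.1 w.2 ≤ lagr A b c z.1 z.2 ∧ lagr A b c z.1 z.2 ≤ lagr A b c w.1 z.2

/-- The quadratic form `‖z‖²_{P_s}` induced by `P_s = [[(1/s)I, Aᵀ],[A,(1/s)I]]`. -/
noncomputable def PsSq {m n : ℕ} (A : Matrix (Fin m) (Fin n) ℝ) (s : ℝ)
    (z : (Fin n → ℝ) × (Fin m → ℝ)) : ℝ :=
  (1 / s) * (z.1 ⬝ᵥ z.1 + z.2 ⬝ᵥ z.2) + 2 * (A.mulVec z.1 ⬝ᵥ z.2)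

/-- The `P_s` norm. -/
noncomputable def PsNorm {m n : ℕ} (A : Matrix (Fin m) (Fin n) ℝ) (s : ℝ)
    (z : (Fin n → ℝ) × (Fin m → ℝ)) : ℝ := Real.sqrt (PsSq A s z)

/-- Euclidean norm on the primal-dual pair space. -/
noncomputable def enormP {m n : ℕ} (z : (Fin n → ℝ) × (Fin m → ℝ)) : ℝ :=
  Real.sqrt (z.1 ⬝ᵥ z.1 + z.2 ⬝ᵥ z.2)

/-- Normalized duality gap `ρ_r(z)`. -/
noncomputable def rho {m n : ℕ} (A : Matrix (Fin m) (Fin n) ℝ) (b : Fin m → ℝ)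
    (c : Fin n → ℝ) (r : ℝ) (z : (Fin n → ℝ) × (Fin m → ℝ)) : ℝ :=
  (1 / r) * sSup {g | ∃ w : (Fin n → ℝ) × (Fin m → ℝ), inZ w ∧ enormP (w - z) ≤ r ∧
    g = lagr A b c z.1 w.2 - lagr A b c w.1 z.2}

/-- Euclidean distance to the saddle-point set `Z*`. -/
noncomputable def dist2 {m n : ℕ} (A : Matrix (Fin m) (Fin n) ℝ) (b : Fin m → ℝ)
    (c : Fin n → ℝ) (z : (Fin n → ℝ) × (Fin m → ℝ)) : ℝ :=
  sInf {d | ∃ w, isSaddle A b c w ∧ d = enormP (z - w)}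

/-- `P_s`-distance to the saddle-point set `Z*`. -/
noncomputable def distPs {m n : ℕ} (A : Matrix (Fin m) (Fin n) ℝ) (b : Fin m → ℝ)
    (c : Fin n → ℝ) (s : ℝ) (z : (Fin n → ℝ) × (Fin m → ℝ)) : ℝ :=
  sInf {d | ∃ w, isSaddle A b c w ∧ d = PsNorm A s (z - w)}

/-- `v` is the infimal displacement vector of `T`: the minimum-`P_s`-norm element
of the closure of `range (T - I)`. -/
def isIDV {m n : ℕ} (A : Matrix (Fin m) (Fin n) ℝ) (s : ℝ)
    (T : (Fin n → ℝ) × (Fin m → ℝ) → (Fin n → ℝ) × (Fin m → ℝ))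
    (v : (Fin n → ℝ) × (Fin m → ℝ)) : Prop :=
  v ∈ closure {w | ∃ z, w = T z - z} ∧
  ∀ w ∈ closure {w | ∃ z, w = T z - z}, PsNorm A s v ≤ PsNorm A s w

namespace PDHGaux
variable {m n : ℕ}

lemma dp_self_nonneg {d : ℕ} (x : Fin d → ℝ) : 0 ≤ x ⬝ᵥ x :=
  Finset.sum_nonneg fun i _ => mul_self_nonneg _

lemma enorm_nonneg {d : ℕ} (x : Fin d → ℝ) : 0 ≤ _root_.enorm x := Real.sqrt_nonneg _

lemma enorm_sq {d : ℕ} (x : Fin d → ℝ) : _root_.enorm x ^ 2 = x ⬝ᵥ x := by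
  rw [_root_.enorm, Real.sq_sqrt (dp_self_nonneg x)]

lemma enorm_smul {d : ℕ} (t : ℝ) (x : Fin d → ℝ) : _root_.enorm (t • x) = |t| * _root_.enorm x := by
  rw [_root_.enorm, smul_dotProduct, dotProduct_smul, smul_eq_mul, smul_eq_mul, ← mul_assoc, _root_.enorm,
    Real.sqrt_mul (mul_self_nonneg t), ← abs_mul_abs_self t, Real.sqrt_mul_self (abs_nonneg t)]

/-- Cauchy–Schwarz for dot products. -/
lemma abs_dp_le {d : ℕ} (x y : Fin d → ℝ) : |x ⬝ᵥ y| ≤ _root_.enorm x * _root_.enorm y := by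
  have h := Finset.sum_mul_sq_le_sq_mul_sq Finset.univ x y
  have h2 : (x ⬝ᵥ y) ^ 2 ≤ (_root_.enorm x * _root_.enorm y) ^ 2 := by
    rw [mul_pow, enorm_sq, enorm_sq]
    simpa [dotProduct, pow_two] using h
  have h3 : |x ⬝ᵥ y| = Real.sqrt ((x ⬝ᵥ y) ^ 2) := (Real.sqrt_sq_eq_abs _).symm
  rw [h3]
  calc Real.sqrt ((x ⬝ᵥ y) ^ 2) ≤ Real.sqrt ((_root_.enorm x * _root_.enorm y) ^ 2) := Real.sqrt_le_sqrt h2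
    _ = |_root_.enorm x * _root_.enorm y| := Real.sqrt_sq_eq_abs _
    _ = _root_.enorm x * _root_.enorm y := abs_of_nonneg (mul_nonneg (enorm_nonneg x) (enorm_nonneg y))

lemma specNorm_bddAbove {A : Matrix (Fin m) (Fin n) ℝ} :
    BddAbove {t | ∃ x : Fin n → ℝ, x ⬝ᵥ x ≤ 1 ∧ t = _root_.enorm (A.mulVec x)} := by
  refine ⟨Real.sqrt (∑ i, ∑ j, A i j ^ 2), ?_⟩
  rintro t ⟨x, hx, rfl⟩
  rw [_root_.enorm]
  apply Real.sqrt_le_sqrt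
  have : ∀ i, (A.mulVec x) i * (A.mulVec x) i ≤ ∑ j, A i j ^ 2 := by
    intro i
    have h := Finset.sum_mul_sq_le_sq_mul_sq Finset.univ (fun j => A i j) x
    calc (A.mulVec x) i * (A.mulVec x) i = (∑ j, A i j * x j) ^ 2 := by
          simp [Matrix.mulVec, dotProduct, pow_two]
      _ ≤ (∑ j, A i j ^ 2) * ∑ j, x j ^ 2 := h
      _ ≤ (∑ j, A i j ^ 2) * 1 := by
          apply mul_le_mul_of_nonneg_left _ (Finset.sum_nonneg fun j _ => sq_nonneg _)
          simpa [dotProduct, pow_two] using hx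
      _ = ∑ j, A i j ^ 2 := mul_one _
  exact Finset.sum_le_sum fun i _ => this i

lemma specNorm_nonneg (A : Matrix (Fin m) (Fin n) ℝ) : 0 ≤ specNorm A := by
  have h0 : (0:ℝ) ∈ {t | ∃ x : Fin n → ℝ, x ⬝ᵥ x ≤ 1 ∧ t = _root_.enorm (A.mulVec x)} :=
    ⟨0, by simp [dp_self_nonneg], by simp [_root_.enorm, Matrix.mulVec_zero, dotProduct]⟩
  exact le_csSup specNorm_bddAbove h0

lemma enorm_mulVec_le (A : Matrix (Fin m) (Fin n) ℝ) (x : Fin n → ℝ) :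
    _root_.enorm (A.mulVec x) ≤ specNorm A * _root_.enorm x := by
  rcases eq_or_ne x 0 with rfl | hx
  · simp [_root_.enorm, Matrix.mulVec_zero, dotProduct]
  · have hxx : 0 < x ⬝ᵥ x := by
      rcases Function.ne_iff.mp hx with ⟨i, hi⟩
      simp only [Pi.zero_apply] at hi
      exact Finset.sum_pos' (fun j _ => mul_self_nonneg _)
        ⟨i, Finset.mem_univ i, mul_self_pos.mpr hi⟩
    have hr : 0 < _root_.enorm x := Real.sqrt_pos.mpr hxx
    have hmem : _root_.enorm (A.mulVec ((_root_.enorm x)⁻¹ • x)) ∈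
        {t | ∃ x : Fin n → ℝ, x ⬝ᵥ x ≤ 1 ∧ t = _root_.enorm (A.mulVec x)} := by
      refine ⟨(_root_.enorm x)⁻¹ • x, ?_, rfl⟩
      rw [smul_dotProduct, dotProduct_smul, smul_eq_mul, smul_eq_mul]
      rw [show (_root_.enorm x)⁻¹ * ((_root_.enorm x)⁻¹ * (x ⬝ᵥ x)) = (x ⬝ᵥ x) / (_root_.enorm x)^2 by ring]
      rw [enorm_sq, div_self (ne_of_gt hxx)]
    have hle := le_csSup specNorm_bddAbove hmem
    rw [Matrix.mulVec_smul, enorm_smul, abs_of_nonneg (inv_nonneg.mpr hr.le)] at hle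
    calc _root_.enorm (A.mulVec x) = _root_.enorm x * ((_root_.enorm x)⁻¹ * _root_.enorm (A.mulVec x)) := by
          field_simp
      _ ≤ _root_.enorm x * specNorm A := by
          exact mul_le_mul_of_nonneg_left hle hr.le
      _ = specNorm A * _root_.enorm x := mul_comm _ _


noncomputable def Pinner (A : Matrix (Fin m) (Fin n) ℝ) (s : ℝ)
    (z w : (Fin n → ℝ) × (Fin m → ℝ)) : ℝ :=
  (1 / s) * (z.1 ⬝ᵥ w.1 + z.2 ⬝ᵥ w.2) + A.mulVec z.1 ⬝ᵥ w.2 + A.mulVec w.1 ⬝ᵥ z.2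

lemma PsSq_eq_Pinner (A : Matrix (Fin m) (Fin n) ℝ) (s : ℝ) (z) :
    PsSq A s z = Pinner A s z z := by
  simp [PsSq, Pinner]; ring

lemma Pinner_comm (A : Matrix (Fin m) (Fin n) ℝ) (s : ℝ) (z w) :
    Pinner A s z w = Pinner A s w z := by
  simp [Pinner, dotProduct_comm z.1 w.1, dotProduct_comm z.2 w.2]; ring

lemma Pinner_sub_right (A : Matrix (Fin m) (Fin n) ℝ) (s : ℝ) (z w₁ w₂) :
    Pinner A s z (w₁ - w₂) = Pinner A s z w₁ - Pinner A s z w₂ := by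
  simp [Pinner, dotProduct_sub, sub_dotProduct, Matrix.mulVec_sub, Prod.fst_sub, Prod.snd_sub]
  ring

/-- Expansion of `PsSq (a - b)`. -/
lemma PsSq_sub_expand (A : Matrix (Fin m) (Fin n) ℝ) (s : ℝ) (a b) :
    PsSq A s (a - b) = PsSq A s a - 2 * Pinner A s a b + PsSq A s b := by
  simp only [PsSq, Pinner, Prod.fst_sub, Prod.snd_sub, dotProduct_sub, sub_dotProduct,
    Matrix.mulVec_sub]
  rw [dotProduct_comm b.1 a.1, dotProduct_comm b.2 a.2]
  ring

lemma projPos_nonneg {d : ℕ} (x : Fin d → ℝ) (i : Fin d) : 0 ≤ projPos x i := le_max_right _ _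

lemma proj_ineq {d : ℕ} (h v : Fin d → ℝ) (hv : ∀ i, 0 ≤ v i) :
    (h - projPos h) ⬝ᵥ (v - projPos h) ≤ 0 := by
  apply Finset.sum_nonpos
  intro i _
  simp only [Pi.sub_apply, projPos]
  rcases le_or_gt (h i) 0 with h0 | h0
  · rw [max_eq_right h0]
    have h1 : h i - 0 ≤ 0 := by linarith
    have h2 : 0 ≤ v i - 0 := by simpa using hv i
    exact mul_nonpos_iff.mpr (Or.inr ⟨h1, h2⟩)
  · rw [max_eq_left h0.le]
    simp

/-- Core algebraic identity, stated with free vectors. -/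
lemma fne_core (A : Matrix (Fin m) (Fin n) ℝ) {s : ℝ} (hs : s ≠ 0) (X χ : Fin n → ℝ) (γ : Fin m → ℝ) :
    Pinner A s (X, γ - s • (A.mulVec ((2:ℝ) • X - χ))) (χ, γ)
      - PsSq A s (X, γ - s • (A.mulVec ((2:ℝ) • X - χ)))
    = (1 / s) * ((χ - X) ⬝ᵥ X) + γ ⬝ᵥ A.mulVec X := by
  rw [PsSq_eq_Pinner]
  simp only [Pinner, Matrix.mulVec_add, Matrix.mulVec_sub, Matrix.mulVec_smul,
    dotProduct_add, add_dotProduct, dotProduct_sub, sub_dotProduct,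
    dotProduct_smul, smul_dotProduct, smul_eq_mul]
  rw [dotProduct_comm γ (A.mulVec X), dotProduct_comm γ (A.mulVec χ),
    dotProduct_comm (A.mulVec χ) (A.mulVec X), dotProduct_comm χ X]
  field_simp
  ring

/-- Firm nonexpansiveness of PDHG in the `P_s` inner product. -/
lemma fne (A : Matrix (Fin m) (Fin n) ℝ) (b : Fin m → ℝ) (c : Fin n → ℝ) {s : ℝ}
    (hs : 0 < s) (z w : (Fin n → ℝ) × (Fin m → ℝ)) :
    PsSq A s (pdhgT A b c s z - pdhgT A b c s w)
      ≤ Pinner A s (pdhgT A b c s z - pdhgT A b c s w) (z - w) := by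
  have hsne : s ≠ 0 := hs.ne'
  set hz := z.1 + s • Aᵀ.mulVec z.2 - s • c with hhz
  set hw := w.1 + s • Aᵀ.mulVec w.2 - s • c with hhw
  set xp := projPos hz with hxp
  set xq := projPos hw with hxq
  have hTz : pdhgT A b c s z = (xp, z.2 - s • A.mulVec ((2:ℝ) • xp - z.1) + s • b) := rfl
  have hTw : pdhgT A b c s w = (xq, w.2 - s • A.mulVec ((2:ℝ) • xq - w.1) + s • b) := rfl
  have hX : pdhgT A b c s z - pdhgT A b c s w
      = (xp - xq, (z.2 - w.2) - s • (A.mulVec ((2:ℝ) • (xp - xq) - (z.1 - w.1)))) := by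
    rw [hTz, hTw, Prod.mk_sub_mk]
    refine Prod.ext rfl ?_
    simp only [smul_sub, Matrix.mulVec_sub, Matrix.mulVec_smul, smul_smul]
    module
  have hzw : z - w = (z.1 - w.1, z.2 - w.2) := rfl
  rw [hX, hzw]
  have key := fne_core A hsne (xp - xq) (z.1 - w.1) (z.2 - w.2)
  rw [← sub_nonneg, key]
  have h1 : (hz - xp) ⬝ᵥ (xq - xp) ≤ 0 := proj_ineq hz xq (projPos_nonneg hw)
  have h2 : (hw - xq) ⬝ᵥ (xp - xq) ≤ 0 := proj_ineq hw xp (projPos_nonneg hz)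
  have hAT : ∀ (γ : Fin m → ℝ) (X : Fin n → ℝ), (Aᵀ.mulVec γ) ⬝ᵥ X = γ ⬝ᵥ A.mulVec X := by
    intro γ X
    rw [Matrix.mulVec_transpose, ← Matrix.dotProduct_mulVec]
  have hiden : 1 / s * ((z.1 - w.1 - (xp - xq)) ⬝ᵥ (xp - xq)) + (z.2 - w.2) ⬝ᵥ A.mulVec (xp - xq)
      = (1 / s) * (-((hz - xp) ⬝ᵥ (xq - xp)) + -((hw - xq) ⬝ᵥ (xp - xq))) := by
    simp only [hhz, hhw, sub_dotProduct, dotProduct_sub, add_dotProduct, dotProduct_add,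
      smul_dotProduct, dotProduct_smul, smul_eq_mul, Matrix.mulVec_sub, Matrix.mulVec_add, hAT]
    field_simp
    ring
  rw [hiden]
  have := mul_nonneg (le_of_lt (by positivity : (0:ℝ) < 1 / s))
    (by linarith : (0:ℝ) ≤ -((hz - xp) ⬝ᵥ (xq - xp)) + -((hw - xq) ⬝ᵥ (xp - xq)))
  linarith

lemma dp_self_eq_zero {d : ℕ} {x : Fin d → ℝ} (h : x ⬝ᵥ x = 0) : x = 0 := by
  funext i
  have := (Finset.sum_eq_zero_iff_of_nonneg (fun j _ => mul_self_nonneg (x j))).mp h i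
    (Finset.mem_univ i)
  simpa [mul_self_eq_zero] using this

section PsFacts
variable {A : Matrix (Fin m) (Fin n) ℝ} {s : ℝ}

lemma PsSq_lower (hs : 0 < s) (z : (Fin n → ℝ) × (Fin m → ℝ)) :
    (1 / s - specNorm A) * (z.1 ⬝ᵥ z.1 + z.2 ⬝ᵥ z.2) ≤ PsSq A s z := by
  have h1 : |A.mulVec z.1 ⬝ᵥ z.2| ≤ _root_.enorm (A.mulVec z.1) * _root_.enorm z.2 := abs_dp_le _ _
  have h2 : _root_.enorm (A.mulVec z.1) * _root_.enorm z.2 ≤ specNorm A * _root_.enorm z.1 * _root_.enorm z.2 :=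
    mul_le_mul_of_nonneg_right (enorm_mulVec_le A z.1) (enorm_nonneg _)
  have h3 : 2 * (_root_.enorm z.1 * _root_.enorm z.2) ≤ z.1 ⬝ᵥ z.1 + z.2 ⬝ᵥ z.2 := by
    nlinarith [sq_nonneg (_root_.enorm z.1 - _root_.enorm z.2), enorm_sq z.1, enorm_sq z.2]
  have h4 : -(specNorm A * (z.1 ⬝ᵥ z.1 + z.2 ⬝ᵥ z.2)) ≤ 2 * (A.mulVec z.1 ⬝ᵥ z.2) := by
    have habs : -(A.mulVec z.1 ⬝ᵥ z.2) ≤ specNorm A * _root_.enorm z.1 * _root_.enorm z.2 := by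
      have := neg_abs_le (A.mulVec z.1 ⬝ᵥ z.2)
      linarith [h1.trans h2]
    nlinarith [specNorm_nonneg A, mul_le_mul_of_nonneg_left h3 (specNorm_nonneg A)]
  have : PsSq A s z = (1 / s) * (z.1 ⬝ᵥ z.1 + z.2 ⬝ᵥ z.2) + 2 * (A.mulVec z.1 ⬝ᵥ z.2) := rfl
  nlinarith [h4]

lemma coeff_pos (hs : 0 < s) (hsA : s * specNorm A < 1) : 0 < 1 / s - specNorm A := by
  rw [sub_pos, lt_div_iff₀ hs]
  linarith [mul_comm s (specNorm A)]

lemma PsSq_nonneg (hs : 0 < s) (hsA : s * specNorm A < 1)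
    (z : (Fin n → ℝ) × (Fin m → ℝ)) : 0 ≤ PsSq A s z := by
  have := PsSq_lower (A := A) hs z
  have h0 : 0 ≤ (1 / s - specNorm A) * (z.1 ⬝ᵥ z.1 + z.2 ⬝ᵥ z.2) :=
    mul_nonneg (coeff_pos hs hsA).le (add_nonneg (dp_self_nonneg z.1) (dp_self_nonneg z.2))
  linarith

lemma PsSq_eq_zero (hs : 0 < s) (hsA : s * specNorm A < 1)
    {z : (Fin n → ℝ) × (Fin m → ℝ)} (h : PsSq A s z ≤ 0) : z = 0 := by
  have hlow := PsSq_lower (A := A) hs z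
  have hc := coeff_pos (A := A) hs hsA
  have hxy : z.1 ⬝ᵥ z.1 + z.2 ⬝ᵥ z.2 ≤ 0 := by
    by_contra hpos
    push_neg at hpos
    nlinarith
  have hx : z.1 ⬝ᵥ z.1 = 0 := le_antisymm (by linarith [dp_self_nonneg z.2]) (dp_self_nonneg z.1)
  have hy : z.2 ⬝ᵥ z.2 = 0 := le_antisymm (by linarith [dp_self_nonneg z.1]) (dp_self_nonneg z.2)
  have : z = (z.1, z.2) := rfl
  rw [this, dp_self_eq_zero hx, dp_self_eq_zero hy]
  rfl

lemma PsSq_le_of_PsNorm_le (hs : 0 < s) (hsA : s * specNorm A < 1)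
    {u w : (Fin n → ℝ) × (Fin m → ℝ)} (h : PsNorm A s u ≤ PsNorm A s w) :
    PsSq A s u ≤ PsSq A s w := by
  have hu := PsSq_nonneg (A := A) hs hsA u
  have hw := PsSq_nonneg (A := A) hs hsA w
  calc PsSq A s u = (PsNorm A s u) ^ 2 := by rw [PsNorm, Real.sq_sqrt hu]
    _ ≤ (PsNorm A s w) ^ 2 := by
        apply pow_le_pow_left₀ (Real.sqrt_nonneg _) h
    _ = PsSq A s w := by rw [PsNorm, Real.sq_sqrt hw]

end PsFacts
/-- The image of a polyhedron under a linear map is closed (core version, inner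
product space). -/
lemma isClosed_image_polyhedron_core
    {E F ι : Type*} [NormedAddCommGroup E] [InnerProductSpace ℝ E] [FiniteDimensional ℝ E]
    [NormedAddCommGroup F] [NormedSpace ℝ F] [Fintype ι]
    (ℓ : ι → E →ₗ[ℝ] ℝ) (d : ι → ℝ) (M : E →ₗ[ℝ] F) :
    IsClosed (M '' {z | ∀ i, ℓ i z ≤ d i}) := by
  classical
  set P := {z : E | ∀ i, ℓ i z ≤ d i} with hPdef
  have hPclosed : IsClosed P := by
    have : P = ⋂ i, {z | ℓ i z ≤ d i} := by ext z; simp [hPdef, Set.mem_iInter]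
    rw [this]
    exact isClosed_iInter fun i =>
      isClosed_le (ℓ i).continuous_of_finiteDimensional continuous_const
  refine isClosed_of_closure_subset fun y hy => ?_
  obtain ⟨yk, hyk, hylim⟩ := mem_closure_iff_seq_limit.mp hy
  -- minimal norm preimages
  have hmin : ∀ k : ℕ, ∃ x, (x ∈ P ∧ M x = yk k) ∧
      ∀ x', x' ∈ P → M x' = yk k → ‖x‖ ≤ ‖x'‖ := by
    intro k
    obtain ⟨x0, hx0P, hx0M⟩ := hyk k
    have hCc : IsClosed (P ∩ M ⁻¹' {yk k}) :=
      hPclosed.inter (isClosed_singleton.preimage M.continuous_of_finiteDimensional)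
    have hKc : IsCompact ((P ∩ M ⁻¹' {yk k}) ∩ Metric.closedBall 0 ‖x0‖) :=
      (isCompact_closedBall (0:E) ‖x0‖).inter_left hCc
    have hKne : ((P ∩ M ⁻¹' {yk k}) ∩ Metric.closedBall 0 ‖x0‖).Nonempty :=
      ⟨x0, ⟨hx0P, by simp [hx0M]⟩, by simp⟩
    obtain ⟨x, hxK, hxmin⟩ := hKc.exists_isMinOn hKne continuous_norm.continuousOn
    refine ⟨x, ⟨hxK.1.1, hxK.1.2⟩, fun x' hx'P hx'M => ?_⟩
    by_cases hb : ‖x'‖ ≤ ‖x0‖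
    · exact hxmin ⟨⟨hx'P, by simp [hx'M]⟩, by simpa [Metric.mem_closedBall, dist_zero_right] using hb⟩
    · have hxx0 : ‖x‖ ≤ ‖x0‖ := by
        simpa [Metric.mem_closedBall, dist_zero_right] using hxK.2
      push_neg at hb; linarith
  choose xk hxk hxkmin using hmin
  by_cases hbd : ∃ R, ∀ k, ‖xk k‖ ≤ R
  · obtain ⟨R, hR⟩ := hbd
    have hmem : ∀ k, xk k ∈ Metric.closedBall (0:E) R := fun k => by
      simpa [Metric.mem_closedBall, dist_zero_right] using hR k
    obtain ⟨a, -, φ, hφ, hlim⟩ :=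
      tendsto_subseq_of_bounded Metric.isBounded_closedBall hmem
    have haP : a ∈ P := hPclosed.mem_of_tendsto hlim
      (Filter.Eventually.of_forall fun j => (hxk (φ j)).1)
    have haM : M a = y := by
      have h1 : Tendsto (fun j => M (xk (φ j))) atTop (𝓝 (M a)) :=
        (M.continuous_of_finiteDimensional.tendsto a).comp hlim
      have h2 : (fun j => M (xk (φ j))) = fun j => yk (φ j) :=
        funext fun j => (hxk (φ j)).2
      rw [h2] at h1
      exact tendsto_nhds_unique h1 (hylim.comp hφ.tendsto_atTop)
    exact ⟨a, haP, haM⟩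
  · exfalso
    push_neg at hbd
    have hstep : ∀ k : ℕ, ∃ j, k < j ∧ (k:ℝ) + 1 < ‖xk j‖ := by
      intro k
      obtain ⟨j, hj⟩ := hbd (max ((k:ℝ)+1)
        (((Finset.range (k+1)).sup' (by simp) (fun i => ‖xk i‖))))
      refine ⟨j, ?_, lt_of_le_of_lt (le_max_left _ _) hj⟩
      by_contra hjk
      push_neg at hjk
      have h1 : ‖xk j‖ ≤ (Finset.range (k+1)).sup' (by simp) (fun i => ‖xk i‖) :=
        Finset.le_sup' (fun i => ‖xk i‖) (Finset.mem_range.mpr (Nat.lt_succ_of_le hjk))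
      have h2 := le_max_right ((k:ℝ)+1)
        ((Finset.range (k+1)).sup' (by simp) (fun i => ‖xk i‖))
      linarith
    choose ψ hψlt hψnorm using hstep
    have hψtend : Tendsto ψ atTop atTop :=
      tendsto_atTop_mono (fun k => (hψlt k).le) tendsto_id
    have hψpos : ∀ k, 0 < ‖xk (ψ k)‖ := fun k => by
      have := hψnorm k
      have : (0:ℝ) ≤ (k:ℝ) := Nat.cast_nonneg k
      linarith [hψnorm k]
    set u : ℕ → E := fun k => ‖xk (ψ k)‖⁻¹ • xk (ψ k) with hudef
    have hunorm : ∀ k, ‖u k‖ = 1 := fun k => by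
      rw [hudef]
      simp only [norm_smul, norm_inv, norm_norm]
      exact inv_mul_cancel₀ (hψpos k).ne'
    have humem : ∀ k, u k ∈ Metric.closedBall (0:E) 1 := fun k => by
      simp [Metric.mem_closedBall, dist_zero_right, hunorm k]
    obtain ⟨uinf, -, φ, hφ, hulim⟩ :=
      tendsto_subseq_of_bounded Metric.isBounded_closedBall humem
    set g : ℕ → ℕ := fun j => ψ (φ j) with hgdef
    set N : ℕ → ℝ := fun j => ‖xk (g j)‖ with hNdef
    have hNpos : ∀ j, 0 < N j := fun j => hψpos (φ j)
    have hNbig : ∀ j : ℕ, (j:ℝ) + 1 < N j := fun j => by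
      have h1 := hψnorm (φ j)
      have h2 : (j:ℝ) ≤ (φ j : ℝ) := Nat.cast_le.mpr (hφ.le_apply)
      simp only [hNdef, hgdef]
      linarith
    have hNtend : Tendsto N atTop atTop := by
      apply tendsto_atTop_mono (fun j => (hNbig j).le)
      exact Tendsto.atTop_add tendsto_natCast_atTop_atTop tendsto_const_nhds
    have hNinv : Tendsto (fun j => (N j)⁻¹) atTop (𝓝 0) := hNtend.inv_tendsto_atTop
    have hgtend : Tendsto g atTop atTop := hψtend.comp hφ.tendsto_atTop
    have huφ : ∀ j, u (φ j) = (N j)⁻¹ • xk (g j) := fun j => rfl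
    -- norm of uinf is 1
    have huinfnorm : ‖uinf‖ = 1 := by
      have h1 : Tendsto (fun j => ‖u (φ j)‖) atTop (𝓝 ‖uinf‖) :=
        (continuous_norm.tendsto uinf).comp hulim
      have h2 : (fun j => ‖u (φ j)‖) = fun _ => (1:ℝ) := funext fun j => hunorm (φ j)
      rw [h2] at h1
      exact tendsto_nhds_unique h1 tendsto_const_nhds
    -- recession: ℓ i uinf ≤ 0
    have hrec : ∀ i, ℓ i uinf ≤ 0 := by
      intro i
      have h1 : Tendsto (fun j => ℓ i (u (φ j))) atTop (𝓝 (ℓ i uinf)) :=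
        ((ℓ i).continuous_of_finiteDimensional.tendsto uinf).comp hulim
      have h2 : Tendsto (fun j => (N j)⁻¹ * d i) atTop (𝓝 0) := by
        simpa using hNinv.mul_const (d i)
      refine le_of_tendsto_of_tendsto' h1 h2 fun j => ?_
      rw [huφ j, _root_.map_smul, smul_eq_mul]
      exact mul_le_mul_of_nonneg_left ((hxk (g j)).1 i) (inv_nonneg.mpr (hNpos j).le)
    -- M uinf = 0
    have hMuinf : M uinf = 0 := by
      have h1 : Tendsto (fun j => M (u (φ j))) atTop (𝓝 (M uinf)) :=
        (M.continuous_of_finiteDimensional.tendsto uinf).comp hulim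
      have h2 : (fun j => M (u (φ j))) = fun j => (N j)⁻¹ • yk (g j) := by
        funext j
        rw [huφ j, _root_.map_smul, (hxk (g j)).2]
      rw [h2] at h1
      have h3 : Tendsto (fun j => (N j)⁻¹ • yk (g j)) atTop (𝓝 ((0:ℝ) • y)) :=
        hNinv.smul (hylim.comp hgtend)
      rw [zero_smul] at h3
      exact tendsto_nhds_unique h1 h3
    -- eventually positive inner product
    have hinner : ∀ᶠ j in atTop, 0 < ⟪xk (g j), uinf⟫ := by
      have h1 : Tendsto (fun j => ⟪u (φ j), uinf⟫) atTop (𝓝 ⟪uinf, uinf⟫) :=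
        hulim.inner tendsto_const_nhds
      have h2 : (0:ℝ) < ⟪uinf, uinf⟫ := by
        rw [real_inner_self_eq_norm_sq, huinfnorm]; norm_num
      have h3 : ∀ᶠ j in atTop, 0 < ⟪u (φ j), uinf⟫ :=
        h1.eventually (eventually_gt_nhds h2)
      refine h3.mono fun j hj => ?_
      rw [huφ j, real_inner_smul_left] at hj
      have := mul_pos (hNpos j) hj
      rw [← mul_assoc, mul_inv_cancel₀ (hNpos j).ne', one_mul] at this
      exact this
    -- eventually strict slack on tight-direction constraints
    have hslack : ∀ᶠ j in atTop, ∀ i, ℓ i uinf < 0 → ℓ i (xk (g j)) < d i := by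
      rw [eventually_all]
      intro i
      by_cases hi : ℓ i uinf < 0
      · have h1 : Tendsto (fun j => ℓ i (u (φ j))) atTop (𝓝 (ℓ i uinf)) :=
          ((ℓ i).continuous_of_finiteDimensional.tendsto uinf).comp hulim
        have h2 : Tendsto (fun j => N j * ℓ i (u (φ j))) atTop atBot :=
          Tendsto.atTop_mul_neg hi hNtend h1
        have h3 : (fun j => N j * ℓ i (u (φ j))) = fun j => ℓ i (xk (g j)) := by
          funext j
          rw [huφ j, _root_.map_smul, smul_eq_mul, ← mul_assoc, mul_inv_cancel₀ (hNpos j).ne', one_mul]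
        rw [h3] at h2
        exact (h2.eventually (eventually_lt_atBot (d i))).mono fun j hj _ => hj
      · exact Filter.Eventually.of_forall fun j hcon => absurd hcon hi
    obtain ⟨j, hj1, hj2⟩ := (hinner.and hslack).exists
    set x0 := xk (g j) with hx0def
    -- construct the shrunk point
    set bad : Finset ι := Finset.univ.filter (fun i => ℓ i uinf < 0) with hbaddef
    set cand : Finset ℝ :=
      insert ⟪x0, uinf⟫ (bad.image fun i => (d i - ℓ i x0) / (-(ℓ i uinf))) with hcanddef
    have hcandne : cand.Nonempty := ⟨_, Finset.mem_insert_self _ _⟩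
    set ε := cand.min' hcandne with hεdef
    have hεpos : 0 < ε := by
      have hmem := cand.min'_mem hcandne
      rw [← hεdef] at hmem
      rw [hcanddef] at hmem
      rcases Finset.mem_insert.mp hmem with h | h
      · rw [h]; exact hj1
      · obtain ⟨i, hi, hival⟩ := Finset.mem_image.mp h
        rw [← hival]
        have hineg : ℓ i uinf < 0 := (Finset.mem_filter.mp hi).2
        exact div_pos (by linarith [hj2 i hineg]) (by linarith)
    have hε1 : ε ≤ ⟪x0, uinf⟫ := Finset.min'_le _ _ (Finset.mem_insert_self _ _)
    have hε2 : ∀ i, ℓ i uinf < 0 → ε ≤ (d i - ℓ i x0) / (-(ℓ i uinf)) := fun i hi =>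
      Finset.min'_le _ _ (Finset.mem_insert_of_mem (Finset.mem_image_of_mem _
        (Finset.mem_filter.mpr ⟨Finset.mem_univ i, hi⟩)))
    set x' := x0 - ε • uinf with hx'def
    have hx'P : x' ∈ P := by
      intro i
      rw [hx'def, map_sub, _root_.map_smul, smul_eq_mul]
      rcases lt_or_eq_of_le (hrec i) with hi | hi
      · have := hε2 i hi
        rw [le_div_iff₀ (by linarith : (0:ℝ) < -(ℓ i uinf))] at this
        have hx0i : ℓ i x0 ≤ d i := (hxk (g j)).1 i
        nlinarith
      · rw [hi, mul_zero, sub_zero]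
        exact (hxk (g j)).1 i
    have hx'M : M x' = yk (g j) := by
      rw [hx'def, map_sub, _root_.map_smul, hMuinf, smul_zero, sub_zero]
      exact (hxk (g j)).2
    have hx'norm : ‖x'‖ < ‖x0‖ := by
      have hexp : ‖x'‖ ^ 2 = ‖x0‖ ^ 2 - 2 * ε * ⟪x0, uinf⟫ + ε ^ 2 := by
        rw [hx'def, norm_sub_sq_real, real_inner_smul_right, norm_smul, huinfnorm]
        rw [mul_one, Real.norm_eq_abs, abs_of_pos hεpos]
        ring
      have h2 : ‖x'‖ ^ 2 < ‖x0‖ ^ 2 := by nlinarith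
      exact lt_of_pow_lt_pow_left₀ 2 (norm_nonneg x0) h2
    have := hxkmin (g j) x' hx'P hx'M
    linarith

/-- The image of a polyhedron under a linear map is closed (general finite-dimensional
normed space version). -/
lemma isClosed_image_polyhedron
    {E F ι : Type*} [NormedAddCommGroup E] [NormedSpace ℝ E] [FiniteDimensional ℝ E]
    [NormedAddCommGroup F] [NormedSpace ℝ F] [Fintype ι]
    (ℓ : ι → E →ₗ[ℝ] ℝ) (d : ι → ℝ) (M : E →ₗ[ℝ] F) :
    IsClosed (M '' {z | ∀ i, ℓ i z ≤ d i}) := by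
  set e := toEuclidean (E := E) with hedef
  set L : EuclideanSpace ℝ (Fin (Module.finrank ℝ E)) →ₗ[ℝ] E :=
    e.symm.toLinearEquiv.toLinearMap with hLdef
  have key := isClosed_image_polyhedron_core (fun i => (ℓ i).comp L) d (M.comp L)
  have himg : M '' {z | ∀ i, ℓ i z ≤ d i}
      = (M.comp L) '' {z' | ∀ i, ((ℓ i).comp L) z' ≤ d i} := by
    ext w
    constructor
    · rintro ⟨z, hz, rfl⟩
      have hLz : L (e z) = z := e.symm_apply_apply z
      refine ⟨e z, fun i => ?_, ?_⟩
      · rw [LinearMap.comp_apply, hLz]; exact hz i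
      · rw [LinearMap.comp_apply, hLz]
    · rintro ⟨z', hz', rfl⟩
      exact ⟨L z', fun i => hz' i, rfl⟩
  rw [himg]
  exact key

/-- The image of a polyhedron under an affine map is closed. -/
lemma isClosed_image_affine_polyhedron
    {E F ι : Type*} [NormedAddCommGroup E] [NormedSpace ℝ E] [FiniteDimensional ℝ E]
    [NormedAddCommGroup F] [NormedSpace ℝ F] [Fintype ι]
    (ℓ : ι → E →ₗ[ℝ] ℝ) (d : ι → ℝ) (M : E →ₗ[ℝ] F) (t : F) :
    IsClosed ((fun z => M z + t) '' {z | ∀ i, ℓ i z ≤ d i}) := by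
  have h1 : (fun z => M z + t) '' {z | ∀ i, ℓ i z ≤ d i}
      = (fun w => w + t) '' (M '' {z | ∀ i, ℓ i z ≤ d i}) := by
    rw [Set.image_image]
  rw [h1]
  exact (Homeomorph.addRight t).isClosedMap _ (isClosed_image_polyhedron ℓ d M)


section Decomposition
variable (A : Matrix (Fin m) (Fin n) ℝ) (b : Fin m → ℝ) (c : Fin n → ℝ) (s : ℝ)

/-- Coordinate truncation to a set `S` of indices. -/
noncomputable def LSmap (S : Finset (Fin n)) : (Fin n → ℝ) →ₗ[ℝ] (Fin n → ℝ) where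
  toFun w := fun i => if i ∈ S then w i else 0
  map_add' u v := by funext i; by_cases h : i ∈ S <;> simp [h]
  map_smul' r u := by funext i; by_cases h : i ∈ S <;> simp [h]

/-- The linear part `x + s Aᵀ y` of the projection argument. -/
noncomputable def lin1 : ((Fin n → ℝ) × (Fin m → ℝ)) →ₗ[ℝ] (Fin n → ℝ) :=
  LinearMap.fst ℝ _ _ + s • (Aᵀ.mulVecLin.comp (LinearMap.snd ℝ _ _))

lemma lin1_apply (z : (Fin n → ℝ) × (Fin m → ℝ)) :
    lin1 A s z = z.1 + s • Aᵀ.mulVec z.2 := by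
  simp [lin1, Matrix.mulVecLin, Matrix.mulVec_transpose]

/-- Linear part of `pdhgT - id` on the piece indexed by `S`. -/
noncomputable def MSmap (S : Finset (Fin n)) :
    ((Fin n → ℝ) × (Fin m → ℝ)) →ₗ[ℝ] ((Fin n → ℝ) × (Fin m → ℝ)) :=
  ((LSmap S).comp (lin1 A s) - LinearMap.fst ℝ _ _).prod
    ((-s) • (A.mulVecLin.comp ((2:ℝ) • (LSmap S).comp (lin1 A s) - LinearMap.fst ℝ _ _)))

lemma MSmap_apply (S : Finset (Fin n)) (z : (Fin n → ℝ) × (Fin m → ℝ)) :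
    MSmap A s S z = (LSmap S (lin1 A s z) - z.1,
      (-s) • A.mulVec ((2:ℝ) • LSmap S (lin1 A s z) - z.1)) := by
  simp [MSmap, Matrix.mulVecLin]

/-- Constant part of `pdhgT - id` on the piece indexed by `S`. -/
noncomputable def tS (S : Finset (Fin n)) : (Fin n → ℝ) × (Fin m → ℝ) :=
  (LSmap S (-(s • c)), (-s) • A.mulVec ((2:ℝ) • LSmap S (-(s • c))) + s • b)

/-- Constraint functionals for the piece indexed by `S`. -/
noncomputable def ellS (S : Finset (Fin n)) (i : Fin n) :
    ((Fin n → ℝ) × (Fin m → ℝ)) →ₗ[ℝ] ℝ :=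
  if i ∈ S then -((LinearMap.proj i).comp (lin1 A s))
  else (LinearMap.proj i).comp (lin1 A s)

noncomputable def dS (S : Finset (Fin n)) (i : Fin n) : ℝ :=
  if i ∈ S then -(s * c i) else s * c i

lemma mem_piece_iff (S : Finset (Fin n)) (z : (Fin n → ℝ) × (Fin m → ℝ)) :
    (∀ i, ellS A s S i z ≤ dS c s S i) ↔
      (∀ i, (i ∈ S → 0 ≤ (z.1 + s • Aᵀ.mulVec z.2 - s • c) i) ∧
            (i ∉ S → (z.1 + s • Aᵀ.mulVec z.2 - s • c) i ≤ 0)) := by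
  have hval : ∀ i, (z.1 + s • Aᵀ.mulVec z.2 - s • c) i = lin1 A s z i - s * c i := by
    intro i
    simp [lin1_apply, Pi.sub_apply, Pi.add_apply, Pi.smul_apply, smul_eq_mul]
  constructor
  · intro h i
    have hi := h i
    constructor
    · intro hiS
      rw [ellS, if_pos hiS] at hi
      rw [dS, if_pos hiS] at hi
      simp only [LinearMap.neg_apply, LinearMap.comp_apply, LinearMap.proj_apply,
        neg_le] at hi
      rw [hval]
      linarith
    · intro hiS
      rw [ellS, if_neg hiS] at hi
      rw [dS, if_neg hiS] at hi
      simp only [LinearMap.comp_apply, LinearMap.proj_apply] at hi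
      rw [hval]
      linarith
  · intro h i
    rcases h i with ⟨h1, h2⟩
    by_cases hiS : i ∈ S
    · rw [ellS, if_pos hiS, dS, if_pos hiS]
      have := h1 hiS
      rw [hval] at this
      simp only [LinearMap.neg_apply, LinearMap.comp_apply, LinearMap.proj_apply, neg_le]
      linarith
    · rw [ellS, if_neg hiS, dS, if_neg hiS]
      have := h2 hiS
      rw [hval] at this
      simp only [LinearMap.comp_apply, LinearMap.proj_apply]
      linarith

lemma projPos_eq_LSmap (S : Finset (Fin n)) (h : Fin n → ℝ)
    (hS : ∀ i, (i ∈ S → 0 ≤ h i) ∧ (i ∉ S → h i ≤ 0)) :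
    projPos h = LSmap S h := by
  funext i
  rcases hS i with ⟨h1, h2⟩
  by_cases hiS : i ∈ S
  · simp [projPos, LSmap, hiS, max_eq_left (h1 hiS)]
  · simp [projPos, LSmap, hiS, max_eq_right (h2 hiS)]

lemma piece_affine (S : Finset (Fin n)) (z : (Fin n → ℝ) × (Fin m → ℝ))
    (hz : ∀ i, ellS A s S i z ≤ dS c s S i) :
    pdhgT A b c s z - z = MSmap A s S z + tS A b c s S := by
  have hS := (mem_piece_iff A c s S z).mp hz
  have hproj : projPos (z.1 + s • Aᵀ.mulVec z.2 - s • c)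
      = LSmap S (z.1 + s • Aᵀ.mulVec z.2 - s • c) :=
    projPos_eq_LSmap S _ hS
  have hdec : z.1 + s • Aᵀ.mulVec z.2 - s • c = lin1 A s z + (-(s • c)) := by
    rw [lin1_apply]; abel
  have hLS : LSmap S (z.1 + s • Aᵀ.mulVec z.2 - s • c)
      = LSmap S (lin1 A s z) + LSmap S (-(s • c)) := by
    rw [hdec, map_add]
  have hTz : pdhgT A b c s z = (projPos (z.1 + s • Aᵀ.mulVec z.2 - s • c),
      z.2 - s • A.mulVec ((2:ℝ) • projPos (z.1 + s • Aᵀ.mulVec z.2 - s • c) - z.1) + s • b) := rfl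
  rw [hTz, hproj, hLS, MSmap_apply, tS, Prod.mk_add_mk]
  refine Prod.ext ?_ ?_
  · show LSmap S (lin1 A s z) + LSmap S (-(s • c)) - z.1 = _
    simp only [Prod.fst_sub]
    abel
  · show z.2 - s • A.mulVec ((2:ℝ) • (LSmap S (lin1 A s z) + LSmap S (-(s • c))) - z.1) + s • b
        - z.2 = _
    simp only [Prod.snd_sub, smul_add, Matrix.mulVec_add, Matrix.mulVec_sub, Matrix.mulVec_smul]
    module

/-- The range of `pdhgT - id` is closed. -/
lemma range_closed : IsClosed {w | ∃ z, w = pdhgT A b c s z - z} := by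
  classical
  have hdecomp : {w | ∃ z, w = pdhgT A b c s z - z}
      = ⋃ S : Finset (Fin n),
          (fun z => MSmap A s S z + tS A b c s S) '' {z | ∀ i, ellS A s S i z ≤ dS c s S i} := by
    ext w
    simp only [Set.mem_setOf_eq, Set.mem_iUnion, Set.mem_image]
    constructor
    · rintro ⟨z, rfl⟩
      refine ⟨Finset.univ.filter (fun i => 0 ≤ (z.1 + s • Aᵀ.mulVec z.2 - s • c) i), z, ?_, ?_⟩
      · rw [mem_piece_iff]
        intro i
        constructor
        · intro hiS
          exact (Finset.mem_filter.mp hiS).2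
        · intro hiS
          by_contra hcon
          push_neg at hcon
          exact hiS (Finset.mem_filter.mpr ⟨Finset.mem_univ i, hcon.le⟩)
      · exact (piece_affine A b c s _ z (by
          rw [mem_piece_iff]
          intro i
          constructor
          · intro hiS; exact (Finset.mem_filter.mp hiS).2
          · intro hiS
            by_contra hcon
            push_neg at hcon
            exact hiS (Finset.mem_filter.mpr ⟨Finset.mem_univ i, hcon.le⟩))).symm
    · rintro ⟨S, z, hz, rfl⟩
      exact ⟨z, (piece_affine A b c s S z hz).symm⟩
  rw [hdecomp]
  exact isClosed_iUnion_of_finite fun S =>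
    isClosed_image_affine_polyhedron (ellS A s S) (dS c s S) (MSmap A s S) (tS A b c s S)

end Decomposition


end PDHGaux

/-- **Sublinear convergence of PDHG iterate differences to the infimal displacement
vector** (Theorem 7(a)): there exists `z*` with `T(z*) = z* + v`, and for every such
`z*` and every `k ≥ 1`,
`min_{0 ≤ j ≤ k} ‖v − (z^{j+1} − z^j)‖_{P_s} ≤ (1/√k)·‖z⁰ − z*‖_{P_s}`. -/
theorem pdhg_difference_of_iterates {m n : ℕ} (A : Matrix (Fin m) (Fin n) ℝ)
    (b : Fin m → ℝ) (c : Fin n → ℝ) (s : ℝ) (hs : 0 < s) (hsA : s * specNorm A < 1)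
    (v : (Fin n → ℝ) × (Fin m → ℝ)) (hv : isIDV A s (pdhgT A b c s) v)
    (z : ℕ → (Fin n → ℝ) × (Fin m → ℝ))
    (hz : ∀ k, z (k + 1) = pdhgT A b c s (z k)) :
    (∃ zst : (Fin n → ℝ) × (Fin m → ℝ), pdhgT A b c s zst = zst + v) ∧
    ∀ zst : (Fin n → ℝ) × (Fin m → ℝ), pdhgT A b c s zst = zst + v →
      ∀ k : ℕ, 1 ≤ k →
        (⨅ j : Fin (k + 1), PsNorm A s (v - (z ((j : ℕ) + 1) - z (j : ℕ))))
          ≤ (1 / Real.sqrt (k : ℝ)) * PsNorm A s (z 0 - zst) := by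

  have hclosed := PDHGaux.range_closed A b c s
  have hvmem : v ∈ {w | ∃ z, w = pdhgT A b c s z - z} := by
    have h1 := hv.1
    rwa [hclosed.closure_eq] at h1
  obtain ⟨z0, hz0⟩ := hvmem
  have hz0' : pdhgT A b c s z0 = z0 + v := by rw [hz0]; abel
  refine ⟨⟨z0, hz0'⟩, ?_⟩
  intro zst hzst k hk
  have hQv_min : ∀ u : (Fin n → ℝ) × (Fin m → ℝ),
      (∃ w, u = pdhgT A b c s w - w) → PsSq A s v ≤ PsSq A s u := fun u hu =>
    PDHGaux.PsSq_le_of_PsNorm_le hs hsA (hv.2 u (subset_closure hu))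
  -- the translated points zst + j•v are also "fixed up to v"
  have main : ∀ j : ℕ, pdhgT A b c s (zst + (j:ℝ) • v) - (zst + (j:ℝ) • v) = v := by
    intro j
    induction j with
    | zero =>
      simp only [Nat.cast_zero, zero_smul, add_zero]
      rw [hzst]; abel
    | succ j ih =>
      push_cast
      set wj := zst + (j:ℝ) • v with hwj
      have hTwj : pdhgT A b c s wj = zst + ((j:ℝ)+1) • v := by
        have h2 : pdhgT A b c s wj = wj + v := by rw [← ih]; abel
        rw [h2, hwj]; module
      set wj1 := zst + ((j:ℝ)+1) • v with hwj1
      set u' := pdhgT A b c s wj1 - wj1 with hu'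
      have hfne := PDHGaux.fne A b c hs wj1 wj
      have hTdiff : pdhgT A b c s wj1 - pdhgT A b c s wj = u' := by
        rw [hTwj, hu']
      have hzw : wj1 - wj = v := by rw [hwj1, hwj]; module
      rw [hTdiff, hzw] at hfne
      have hmin := hQv_min u' ⟨wj1, rfl⟩
      have hexp := PDHGaux.PsSq_sub_expand A s u' v
      have hle : PsSq A s (u' - v) ≤ 0 := by linarith
      have hzero : u' - v = 0 := PDHGaux.PsSq_eq_zero hs hsA hle
      exact sub_eq_zero.mp hzero
  have hshift : ∀ j : ℕ, pdhgT A b c s (zst + (j:ℝ) • v) = zst + ((j:ℝ)+1) • v := by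
    intro j
    have h1 := main j
    rw [sub_eq_iff_eq_add] at h1
    rw [h1]; module
  -- per-step decrease
  have hstep : ∀ j : ℕ, PsSq A s (v - (z (j+1) - z j))
      ≤ PsSq A s (z j - (zst + (j:ℝ) • v)) - PsSq A s (z (j+1) - (zst + ((j:ℝ)+1) • v)) := by
    intro j
    have hfne := PDHGaux.fne A b c hs (z j) (zst + (j:ℝ) • v)
    rw [← hz j, hshift j] at hfne
    set a := z j - (zst + (j:ℝ) • v) with ha
    set bb := z (j+1) - (zst + ((j:ℝ)+1) • v) with hbb
    have hexp := PDHGaux.PsSq_sub_expand A s a bb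
    have hab : a - bb = v - (z (j+1) - z j) := by rw [ha, hbb]; module
    have hcomm := PDHGaux.Pinner_comm A s a bb
    rw [← hab]
    linarith
  -- telescoping sum
  set f : ℕ → ℝ := fun j => PsSq A s (z j - (zst + (j:ℝ) • v)) with hf
  have hsum : ∑ j ∈ Finset.range k, PsSq A s (v - (z (j+1) - z j))
      ≤ PsSq A s (z 0 - zst) := by
    have h1 : ∑ j ∈ Finset.range k, PsSq A s (v - (z (j+1) - z j))
        ≤ ∑ j ∈ Finset.range k, (f j - f (j+1)) := by
      apply Finset.sum_le_sum
      intro j _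
      have := hstep j
      have hcast : f (j+1) = PsSq A s (z (j+1) - (zst + ((j:ℝ)+1) • v)) := by
        simp only [hf]
        push_cast
        ring_nf
      rw [hcast]
      simp only [hf]
      exact this
    rw [Finset.sum_range_sub' f k] at h1
    have hf0 : f 0 = PsSq A s (z 0 - zst) := by
      rw [hf]; simp
    have hfk : 0 ≤ f k := PDHGaux.PsSq_nonneg hs hsA _
    rw [hf0] at h1
    linarith
  have hkpos : (0:ℝ) < k := by exact_mod_cast hk
  have hex : ∃ j ∈ Finset.range k,
      PsSq A s (v - (z (j+1) - z j)) ≤ PsSq A s (z 0 - zst) / k := by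
    apply Finset.exists_le_of_sum_le (Finset.nonempty_range_iff.mpr (by omega))
    rw [Finset.sum_const, Finset.card_range, nsmul_eq_mul]
    rw [mul_div_cancel₀ _ (ne_of_gt hkpos)]
    exact hsum
  obtain ⟨j0, hj0k, hj0⟩ := hex
  have hbdd : BddBelow (Set.range fun j : Fin (k+1) =>
      PsNorm A s (v - (z ((j:ℕ)+1) - z (j:ℕ)))) := by
    refine ⟨0, ?_⟩
    rintro x ⟨j, rfl⟩
    exact Real.sqrt_nonneg _
  have hj0lt : j0 < k + 1 := by
    have := Finset.mem_range.mp hj0k; omega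
  have hle := ciInf_le hbdd (⟨j0, hj0lt⟩ : Fin (k+1))
  calc (⨅ j : Fin (k + 1), PsNorm A s (v - (z ((j : ℕ) + 1) - z (j : ℕ))))
      ≤ PsNorm A s (v - (z (j0+1) - z j0)) := by simpa using hle
    _ ≤ Real.sqrt (PsSq A s (z 0 - zst) / k) := Real.sqrt_le_sqrt hj0
    _ = (1 / Real.sqrt (k:ℝ)) * PsNorm A s (z 0 - zst) := by
        rw [Real.sqrt_div (PDHGaux.PsSq_nonneg hs hsA _), PsNorm]
        rw [one_div, inv_mul_eq_div]
end

section
/- Equal-step-size PDHG is nonexpansive in the P_s norm: let T be the PDHG operator for a standard-form LP with step size 0 < s < 1/‖A‖₂. Then for all z, z' ∈ ℝⁿ × ℝᵐ, ‖T(z) − T(z')‖_{P_s} ≤ ‖z − z'‖_{P_s}; moreover the quadratic form ‖(x,y)‖²_{P_s} = (1/s)(‖x‖₂² + ‖y‖₂²) + 2⟨Ax, y⟩ satisfies (1/s)(1 − s‖A‖₂)·(‖x‖₂² + ‖y‖₂²) ≤ ‖(x,y)‖²_{P_s} ≤ (1/s)(1 + s‖A‖₂)·(‖x‖₂² + ‖y‖₂²),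 so ‖·‖_{P_s} is a norm equivalent to the Euclidean norm. -/
open Matrix Filter

section auxPDHG
variable {m n : ℕ} (A : Matrix (Fin m) (Fin n) ℝ)

lemma dot_self_nonneg' {d : ℕ} (x : Fin d → ℝ) : 0 ≤ x ⬝ᵥ x :=
  Finset.sum_nonneg fun i _ => mul_self_nonneg _

lemma dot_sub_sub {d : ℕ} (u v : Fin d → ℝ) :
    (u - v) ⬝ᵥ (u - v) = u ⬝ᵥ u - 2 * (u ⬝ᵥ v) + v ⬝ᵥ v := by
  rw [sub_dotProduct, dotProduct_sub, dotProduct_sub, dotProduct_comm v u]; ring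

lemma specSet_bdd : BddAbove {t | ∃ x : Fin n → ℝ, x ⬝ᵥ x ≤ 1 ∧ t = _root_.enorm (A.mulVec x)} := by
  refine ⟨Real.sqrt (∑ i, ∑ j, (A i j)^2), ?_⟩
  rintro t ⟨x, hx, rfl⟩
  unfold _root_.enorm
  apply Real.sqrt_le_sqrt
  unfold dotProduct Matrix.mulVec dotProduct
  calc ∑ i, (∑ j, A i j * x j) * (∑ j, A i j * x j)
      = ∑ i, (∑ j, A i j * x j) ^ 2 := by simp [sq]
    _ ≤ ∑ i, (∑ j, (A i j)^2) * (∑ j, (x j)^2) := by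
        refine Finset.sum_le_sum fun i _ => ?_
        exact Finset.sum_mul_sq_le_sq_mul_sq _ _ _
    _ ≤ ∑ i, (∑ j, (A i j)^2) * 1 := by
        refine Finset.sum_le_sum fun i _ => ?_
        refine mul_le_mul_of_nonneg_left ?_ (Finset.sum_nonneg fun j _ => sq_nonneg _)
        simpa [dotProduct, sq] using hx
    _ = ∑ i, ∑ j, (A i j)^2 := by simp

lemma specNorm_nonneg' : 0 ≤ specNorm A := by
  apply le_csSup (specSet_bdd A)
  exact ⟨0, by simp [dotProduct], by simp [_root_.enorm, dotProduct]⟩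

lemma specNorm_bound (x : Fin n → ℝ) :
    (A.mulVec x) ⬝ᵥ (A.mulVec x) ≤ specNorm A ^ 2 * (x ⬝ᵥ x) := by
  rcases eq_or_lt_of_le (dot_self_nonneg' x) with h | h
  · have hx : x = 0 := by
      funext i
      have h0 : ∀ j ∈ Finset.univ, x j * x j = 0 :=
        (Finset.sum_eq_zero_iff_of_nonneg
          (fun j (_ : j ∈ Finset.univ) => mul_self_nonneg (x j))).mp h.symm
      have h2 := h0 i (Finset.mem_univ i)
      show x i = 0
      nlinarith [h2]
    simp [hx, Matrix.mulVec_zero, dotProduct_zero]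
  · set r := Real.sqrt (x ⬝ᵥ x) with hr
    have hrpos : 0 < r := Real.sqrt_pos.mpr h
    have hr2 : r ^ 2 = x ⬝ᵥ x := Real.sq_sqrt (le_of_lt h)
    set u : Fin n → ℝ := r⁻¹ • x with hu
    have huu : u ⬝ᵥ u = 1 := by
      rw [hu, smul_dotProduct, dotProduct_smul, smul_eq_mul, smul_eq_mul, ← hr2]
      field_simp
    have hmem : _root_.enorm (A.mulVec u) ∈ {t | ∃ x : Fin n → ℝ, x ⬝ᵥ x ≤ 1 ∧ t = _root_.enorm (A.mulVec x)} :=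
      ⟨u, le_of_eq huu, rfl⟩
    have hle : _root_.enorm (A.mulVec u) ≤ specNorm A := le_csSup (specSet_bdd A) hmem
    have hsq : (A.mulVec u) ⬝ᵥ (A.mulVec u) ≤ specNorm A ^ 2 := by
      have h1 : _root_.enorm (A.mulVec u) ^ 2 = (A.mulVec u) ⬝ᵥ (A.mulVec u) :=
        Real.sq_sqrt (dot_self_nonneg' _)
      calc (A.mulVec u) ⬝ᵥ (A.mulVec u) = _root_.enorm (A.mulVec u) ^ 2 := h1.symm
        _ ≤ specNorm A ^ 2 := pow_le_pow_left₀ (Real.sqrt_nonneg _) hle 2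
    have hAu : A.mulVec u = r⁻¹ • A.mulVec x := by
      rw [hu, Matrix.mulVec_smul]
    rw [hAu, smul_dotProduct, dotProduct_smul, smul_eq_mul, smul_eq_mul] at hsq
    have heq : (A.mulVec x) ⬝ᵥ (A.mulVec x)
        = r^2 * (r⁻¹ * (r⁻¹ * ((A.mulVec x) ⬝ᵥ (A.mulVec x)))) := by
      field_simp
    rw [heq, hr2.symm]
    nlinarith [hsq, sq_nonneg r, hrpos]

lemma cross_bound (x : Fin n → ℝ) (y : Fin m → ℝ) :
    (A.mulVec x ⬝ᵥ y) ^ 2 ≤ specNorm A ^ 2 * (x ⬝ᵥ x) * (y ⬝ᵥ y) := by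
  have hcs : (A.mulVec x ⬝ᵥ y) ^ 2 ≤ ((A.mulVec x) ⬝ᵥ (A.mulVec x)) * (y ⬝ᵥ y) := by
    have := Finset.sum_mul_sq_le_sq_mul_sq Finset.univ (A.mulVec x) y
    simpa [dotProduct, sq, mul_pow] using this
  have h2 := specNorm_bound A x
  nlinarith [dot_self_nonneg' y, hcs, h2]

lemma adj_dot (x : Fin n → ℝ) (y : Fin m → ℝ) :
    x ⬝ᵥ (Aᵀ.mulVec y) = A.mulVec x ⬝ᵥ y := by
  rw [Matrix.mulVec_transpose, dotProduct_comm (A.mulVec x) y, Matrix.dotProduct_mulVec]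
  exact dotProduct_comm _ _

lemma proj_firm {d : ℕ} (p q : Fin d → ℝ) :
    (projPos p - projPos q) ⬝ᵥ (projPos p - projPos q) ≤ (projPos p - projPos q) ⬝ᵥ (p - q) := by
  refine Finset.sum_le_sum fun i _ => ?_
  simp only [Pi.sub_apply, projPos]
  rcases le_total (p i) 0 with h1 | h1 <;> rcases le_total (q i) 0 with h2 | h2 <;>
    simp [max_eq_right, max_eq_left, h1, h2] <;> nlinarith [h1, h2]
end auxPDHG

lemma pdhg_key {m n : ℕ} (A : Matrix (Fin m) (Fin n) ℝ) (s : ℝ) (hs : 0 < s)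
    (hsA : s * specNorm A < 1) (a ap : Fin n → ℝ) (bb : Fin m → ℝ)
    (hFne : ap ⬝ᵥ ap ≤ a ⬝ᵥ ap + s * (A.mulVec ap ⬝ᵥ bb)) :
    PsSq A s (ap, bb - s • A.mulVec ((2:ℝ) • ap - a)) ≤ PsSq A s (a, bb) := by
  have hN : 0 ≤ specNorm A := specNorm_nonneg' A
  have hs0 : s ≠ 0 := ne_of_gt hs
  have hb2 : (bb - s • A.mulVec ((2:ℝ) • ap - a)) ⬝ᵥ (bb - s • A.mulVec ((2:ℝ) • ap - a))
      = bb ⬝ᵥ bb - 2 * s * (2 * (A.mulVec ap ⬝ᵥ bb) - A.mulVec a ⬝ᵥ bb)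
        + s ^ 2 * (4 * (A.mulVec ap ⬝ᵥ A.mulVec ap) - 4 * (A.mulVec a ⬝ᵥ A.mulVec ap)
          + A.mulVec a ⬝ᵥ A.mulVec a) := by
    simp only [Matrix.mulVec_sub, Matrix.mulVec_smul, dotProduct_sub, sub_dotProduct,
      dotProduct_smul, smul_dotProduct, smul_eq_mul]
    simp only [dotProduct_comm bb, dotProduct_comm (A.mulVec ap) (A.mulVec a)]
    try ring
  have hab : A.mulVec ap ⬝ᵥ (bb - s • A.mulVec ((2:ℝ) • ap - a))
      = A.mulVec ap ⬝ᵥ bb - s * (2 * (A.mulVec ap ⬝ᵥ A.mulVec ap) - A.mulVec a ⬝ᵥ A.mulVec ap) := by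
    simp only [Matrix.mulVec_sub, Matrix.mulVec_smul, dotProduct_sub, sub_dotProduct,
      dotProduct_smul, smul_dotProduct, smul_eq_mul]
    simp only [dotProduct_comm (A.mulVec ap) (A.mulVec a)]
    try ring
  have hAA : A.mulVec a ⬝ᵥ A.mulVec a - 2 * (A.mulVec a ⬝ᵥ A.mulVec ap)
        + A.mulVec ap ⬝ᵥ A.mulVec ap
      ≤ specNorm A ^ 2 * (a ⬝ᵥ a - 2 * (a ⬝ᵥ ap) + ap ⬝ᵥ ap) := by
    have h0 := specNorm_bound A (a - ap)
    rwa [Matrix.mulVec_sub, dot_sub_sub, dot_sub_sub] at h0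
  have hD : 0 ≤ a ⬝ᵥ a - 2 * (a ⬝ᵥ ap) + ap ⬝ᵥ ap := by
    have h0 := dot_self_nonneg' (a - ap)
    rwa [dot_sub_sub] at h0
  have hG : 0 ≤ A.mulVec ap ⬝ᵥ A.mulVec ap := dot_self_nonneg' _
  have hkey : 0 ≤ a ⬝ᵥ a - ap ⬝ᵥ ap + 2 * s * (A.mulVec ap ⬝ᵥ bb)
      - s ^ 2 * (A.mulVec a ⬝ᵥ A.mulVec a) + 2 * s ^ 2 * (A.mulVec a ⬝ᵥ A.mulVec ap) := by
    have h1 := mul_le_mul_of_nonneg_left hAA (sq_nonneg s)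
    have h2 : 0 ≤ (1 - s * specNorm A) * ((1 + s * specNorm A)
        * (a ⬝ᵥ a - 2 * (a ⬝ᵥ ap) + ap ⬝ᵥ ap)) :=
      mul_nonneg (le_of_lt (sub_pos.mpr hsA))
        (mul_nonneg (by nlinarith [mul_nonneg hs.le hN]) hD)
    have h3 : 0 ≤ s ^ 2 * (A.mulVec ap ⬝ᵥ A.mulVec ap) := mul_nonneg (sq_nonneg s) hG
    nlinarith [h1, h2, h3, hFne]
  show (1 / s) * (ap ⬝ᵥ ap + (bb - s • A.mulVec ((2:ℝ) • ap - a)) ⬝ᵥ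
        (bb - s • A.mulVec ((2:ℝ) • ap - a)))
      + 2 * (A.mulVec ap ⬝ᵥ (bb - s • A.mulVec ((2:ℝ) • ap - a)))
      ≤ (1 / s) * (a ⬝ᵥ a + bb ⬝ᵥ bb) + 2 * (A.mulVec a ⬝ᵥ bb)
  rw [hb2, hab]
  have heq : (1 / s) * (a ⬝ᵥ a + bb ⬝ᵥ bb) + 2 * (A.mulVec a ⬝ᵥ bb)
      - ((1 / s) * (ap ⬝ᵥ ap + (bb ⬝ᵥ bb - 2 * s * (2 * (A.mulVec ap ⬝ᵥ bb) - A.mulVec a ⬝ᵥ bb)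
        + s ^ 2 * (4 * (A.mulVec ap ⬝ᵥ A.mulVec ap) - 4 * (A.mulVec a ⬝ᵥ A.mulVec ap)
          + A.mulVec a ⬝ᵥ A.mulVec a)))
        + 2 * (A.mulVec ap ⬝ᵥ bb - s * (2 * (A.mulVec ap ⬝ᵥ A.mulVec ap)
          - A.mulVec a ⬝ᵥ A.mulVec ap)))
      = (1 / s) * (a ⬝ᵥ a - ap ⬝ᵥ ap + 2 * s * (A.mulVec ap ⬝ᵥ bb)
        - s ^ 2 * (A.mulVec a ⬝ᵥ A.mulVec a) + 2 * s ^ 2 * (A.mulVec a ⬝ᵥ A.mulVec ap)) := by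
    field_simp
    try ring
  have hpos : 0 ≤ (1 / s) * (a ⬝ᵥ a - ap ⬝ᵥ ap + 2 * s * (A.mulVec ap ⬝ᵥ bb)
      - s ^ 2 * (A.mulVec a ⬝ᵥ A.mulVec a) + 2 * s ^ 2 * (A.mulVec a ⬝ᵥ A.mulVec ap)) :=
    mul_nonneg (by positivity) hkey
  linarith [heq, hpos]


/-- **PDHG is nonexpansive in the `P_s` norm** for `0 < s < 1/‖A‖₂`, and the `P_s`
quadratic form is equivalent to the squared Euclidean norm:
`(1/s)(1 − s‖A‖₂)(‖x‖² + ‖y‖²) ≤ ‖(x,y)‖²_{P_s} ≤ (1/s)(1 + s‖A‖₂)(‖x‖² + ‖y‖²)`. -/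
theorem pdhg_nonexpansive_Ps {m n : ℕ} (A : Matrix (Fin m) (Fin n) ℝ)
    (b : Fin m → ℝ) (c : Fin n → ℝ) (s : ℝ) (hs : 0 < s) (hsA : s * specNorm A < 1) :
    (∀ z w : (Fin n → ℝ) × (Fin m → ℝ),
      PsNorm A s (pdhgT A b c s z - pdhgT A b c s w) ≤ PsNorm A s (z - w)) ∧
    ∀ (x : Fin n → ℝ) (y : Fin m → ℝ),
      (1 / s) * (1 - s * specNorm A) * (x ⬝ᵥ x + y ⬝ᵥ y) ≤ PsSq A s (x, y) ∧
      PsSq A s (x, y) ≤ (1 / s) * (1 + s * specNorm A) * (x ⬝ᵥ x + y ⬝ᵥ y) := by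
  have hN : 0 ≤ specNorm A := specNorm_nonneg' A
  have hs0 : s ≠ 0 := ne_of_gt hs
  have part2 : ∀ (x : Fin n → ℝ) (y : Fin m → ℝ),
      (1 / s) * (1 - s * specNorm A) * (x ⬝ᵥ x + y ⬝ᵥ y) ≤ PsSq A s (x, y) ∧
      PsSq A s (x, y) ≤ (1 / s) * (1 + s * specNorm A) * (x ⬝ᵥ x + y ⬝ᵥ y) := by
    intro x y
    have hX : 0 ≤ x ⬝ᵥ x := dot_self_nonneg' x
    have hY : 0 ≤ y ⬝ᵥ y := dot_self_nonneg' y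
    have hc := cross_bound A x y
    have habs1 : 2 * (A.mulVec x ⬝ᵥ y) ≤ specNorm A * (x ⬝ᵥ x + y ⬝ᵥ y) := by
      nlinarith [hc, sq_nonneg (specNorm A * (x ⬝ᵥ x) - specNorm A * (y ⬝ᵥ y)),
        mul_nonneg hN (add_nonneg hX hY),
        sq_nonneg (specNorm A * (x ⬝ᵥ x + y ⬝ᵥ y) - 2 * (A.mulVec x ⬝ᵥ y)),
        sq_nonneg (specNorm A * (x ⬝ᵥ x + y ⬝ᵥ y) + 2 * (A.mulVec x ⬝ᵥ y))]
    have habs2 : -(specNorm A * (x ⬝ᵥ x + y ⬝ᵥ y)) ≤ 2 * (A.mulVec x ⬝ᵥ y) := by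
      nlinarith [hc, sq_nonneg (specNorm A * (x ⬝ᵥ x) - specNorm A * (y ⬝ᵥ y)),
        mul_nonneg hN (add_nonneg hX hY),
        sq_nonneg (specNorm A * (x ⬝ᵥ x + y ⬝ᵥ y) - 2 * (A.mulVec x ⬝ᵥ y)),
        sq_nonneg (specNorm A * (x ⬝ᵥ x + y ⬝ᵥ y) + 2 * (A.mulVec x ⬝ᵥ y))]
    constructor
    · have heq : (1 / s) * (1 - s * specNorm A) * (x ⬝ᵥ x + y ⬝ᵥ y)
          = (1 / s) * (x ⬝ᵥ x + y ⬝ᵥ y) - specNorm A * (x ⬝ᵥ x + y ⬝ᵥ y) := by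
        field_simp
      show _ ≤ (1 / s) * (x ⬝ᵥ x + y ⬝ᵥ y) + 2 * (A.mulVec x ⬝ᵥ y)
      rw [heq]; linarith [habs2]
    · have heq : (1 / s) * (1 + s * specNorm A) * (x ⬝ᵥ x + y ⬝ᵥ y)
          = (1 / s) * (x ⬝ᵥ x + y ⬝ᵥ y) + specNorm A * (x ⬝ᵥ x + y ⬝ᵥ y) := by
        field_simp
      show (1 / s) * (x ⬝ᵥ x + y ⬝ᵥ y) + 2 * (A.mulVec x ⬝ᵥ y) ≤ _
      rw [heq]; linarith [habs1]
  refine ⟨?_, part2⟩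
  intro z w
  have hdiff : pdhgT A b c s z - pdhgT A b c s w
      = (projPos (z.1 + s • Aᵀ.mulVec z.2 - s • c) - projPos (w.1 + s • Aᵀ.mulVec w.2 - s • c),
        (z.2 - w.2) - s • A.mulVec ((2:ℝ) • (projPos (z.1 + s • Aᵀ.mulVec z.2 - s • c)
          - projPos (w.1 + s • Aᵀ.mulVec w.2 - s • c)) - (z.1 - w.1))) := by
    unfold pdhgT
    refine Prod.ext rfl ?_
    show z.2 - s • A.mulVec ((2:ℝ) • projPos (z.1 + s • Aᵀ.mulVec z.2 - s • c) - z.1) + s • b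
        - (w.2 - s • A.mulVec ((2:ℝ) • projPos (w.1 + s • Aᵀ.mulVec w.2 - s • c) - w.1) + s • b)
        = _
    simp only [Matrix.mulVec_sub, Matrix.mulVec_smul]
    module
  rw [hdiff]
  unfold PsNorm
  apply Real.sqrt_le_sqrt
  have hzw : z - w = (z.1 - w.1, z.2 - w.2) := rfl
  rw [hzw]
  apply pdhg_key A s hs hsA
  -- firm nonexpansiveness of the projection step
  have h0 := proj_firm (z.1 + s • Aᵀ.mulVec z.2 - s • c) (w.1 + s • Aᵀ.mulVec w.2 - s • c)
  have harg : (z.1 + s • Aᵀ.mulVec z.2 - s • c) - (w.1 + s • Aᵀ.mulVec w.2 - s • c)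
      = (z.1 - w.1) + s • (Aᵀ.mulVec (z.2 - w.2)) := by
    simp only [Matrix.mulVec_sub]
    module
  rw [harg] at h0
  calc (projPos (z.1 + s • Aᵀ.mulVec z.2 - s • c) - projPos (w.1 + s • Aᵀ.mulVec w.2 - s • c))
        ⬝ᵥ (projPos (z.1 + s • Aᵀ.mulVec z.2 - s • c) - projPos (w.1 + s • Aᵀ.mulVec w.2 - s • c))
      ≤ _ ⬝ᵥ ((z.1 - w.1) + s • (Aᵀ.mulVec (z.2 - w.2))) := h0
    _ = _ := by
        rw [dotProduct_add, dotProduct_smul, smul_eq_mul, adj_dot,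
          dotProduct_comm _ (z.1 - w.1)]
end
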